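/- Let H be a quasitriangular Hopf algebra with universal R-matrix R = R₁ ⊗ R₂, and let L be an R-quasi-commutative left H-module algebra, i.e. (R₂ ▷ ℓ₂)(R₁ ▷ ℓ₁) = ℓ₁ℓ₂ for all ℓ₁, ℓ₂ ∈ L. Then the map δ(ℓ) := R₂ ⊗ (R₁ ▷ ℓ) defines a left H-coaction on L making L a base algebra over H; in particular δ is an algebra homomorphism L → H ⊗ L and satisfies the base-algebra compatibility conditions. -/

import Mathlib

/-!
STATEMENT 2: Let `H` be a quasitriangular Hopf algebra with universal R-matrix `r`,
and `L` an `r`-quasi-commutative left `H`-module algebra. Then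
`δ(ℓ) := R₂ ⊗ (R₁ ▷ ℓ)` defines a left `H`-coaction on `L` making `L` a base algebra
over `H`: `δ` is a unital algebra homomorphism `L → H ⊗ L`, a coaction (coassociative
and counital), and the two base-algebra compatibility conditions hold.
-/

/-!
Write `δ_ρ(ℓ) = ρ₂ ⊗ (ρ₁ ▷ ℓ)`, which is linear in `ρ ∈ H ⊗ H`. Each axiom of a base algebra
for `δ_R` is the image of an axiom of `R` under a map that is linear in `R`: multiplicativity
comes from `(Δ ⊗ id) R = R₁₃ R₂₃` and the module-algebra rule, coassociativity from
`(id ⊗ Δ) R = R₁₃ R₁₂`, compatibility (i) from `R Δ = Δᵒᵖ R`, and (ii) is quasi-commutativity.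
Unitality and counitality need `(ε ⊗ id) R = 1 = (id ⊗ ε) R`; applying `ε` to the first
two axioms gives `(1 ⊗ (ε ⊗ id) R) R = R` and `((id ⊗ ε) R ⊗ 1) R = R`, and `R` is invertible.
-/

open TensorProduct LinearMap

noncomputable section

variable (k : Type*) [CommRing k]

/-- The "rotation" `(A ⊗ B) ⊗ C → (A ⊗ C) ⊗ B`. -/
def rot3 (A B C : Type*) [AddCommGroup A] [Module k A] [AddCommGroup B] [Module k B]
    [AddCommGroup C] [Module k C] :
    (A ⊗[k] B) ⊗[k] C →ₗ[k] (A ⊗[k] C) ⊗[k] B :=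
  (TensorProduct.assoc k A C B).symm.toLinearMap ∘ₗ
    (LinearMap.lTensor A (TensorProduct.comm k B C).toLinearMap) ∘ₗ
    (TensorProduct.assoc k A B C).toLinearMap

@[simp] lemma rot3_tmul {A B C : Type*} [AddCommGroup A] [Module k A] [AddCommGroup B]
    [Module k B] [AddCommGroup C] [Module k C] (a : A) (b : B) (c : C) :
    rot3 k A B C ((a ⊗ₜ[k] b) ⊗ₜ[k] c) = (a ⊗ₜ[k] c) ⊗ₜ[k] b := by
  simp [rot3]

section CoactionOfRMatrix

variable {k} {H L : Type*} [Ring H] [Bialgebra k H] [Ring L] [Algebra k L]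
variable (act : H ⊗[k] L →ₗ[k] L)

def coactOf : H ⊗[k] H →ₗ[k] L →ₗ[k] H ⊗[k] L :=
  (llcomp k L ((H ⊗[k] H) ⊗[k] L) (H ⊗[k] L)
      (lTensor H act ∘ₗ (TensorProduct.assoc k H H L).toLinearMap)) ∘ₗ
    mk k (H ⊗[k] H) L ∘ₗ (TensorProduct.comm k H H).toLinearMap

@[simp] lemma coactOf_tmul (a b : H) (ℓ : L) :
    coactOf act (a ⊗ₜ[k] b) ℓ = b ⊗ₜ[k] act (a ⊗ₜ[k] ℓ) := by
  simp [coactOf]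

def pairAct (ℓ₁ ℓ₂ : L) : H ⊗[k] H →ₗ[k] L :=
  mul' k L ∘ₗ map act act ∘ₗ (tensorTensorTensorComm k H H L L).toLinearMap ∘ₗ
    (mk k (H ⊗[k] H) (L ⊗[k] L)).flip (ℓ₁ ⊗ₜ[k] ℓ₂)

@[simp] lemma pairAct_tmul (ℓ₁ ℓ₂ : L) (a b : H) :
    pairAct act ℓ₁ ℓ₂ (a ⊗ₜ[k] b) = act (a ⊗ₜ[k] ℓ₁) * act (b ⊗ₜ[k] ℓ₂) := by
  simp [pairAct]

lemma coactOf_mul_eq_lTensor_pairAct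
    (act_alg : ∀ (h : H) (ℓ₁ ℓ₂ : L),
      act (h ⊗ₜ[k] (ℓ₁ * ℓ₂)) = pairAct act ℓ₁ ℓ₂ (Coalgebra.comul h))
    (ℓ₁ ℓ₂ : L) (ρ : H ⊗[k] H) :
    coactOf act ρ (ℓ₁ * ℓ₂) = lTensor H (pairAct act ℓ₁ ℓ₂)
      (TensorProduct.comm k (H ⊗[k] H) H (rTensor H (Coalgebra.comul (R := k)) ρ)) := by
  induction ρ using TensorProduct.induction_on with
  | zero => simp
  | tmul a b => simp [act_alg]
  | add ρ σ hρ hσ => simp only [map_add, LinearMap.add_apply, hρ, hσ]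

lemma lTensor_pairAct_comm_rot3_mul (ℓ₁ ℓ₂ : L) (ρ σ : H ⊗[k] H) :
    lTensor H (pairAct act ℓ₁ ℓ₂) (TensorProduct.comm k (H ⊗[k] H) H
        (rot3 k H H H (ρ ⊗ₜ[k] 1) * (TensorProduct.assoc k H H H).symm (1 ⊗ₜ[k] σ))) =
      coactOf act ρ ℓ₁ * coactOf act σ ℓ₂ := by
  induction ρ using TensorProduct.induction_on with
  | zero => simp
  | tmul a b =>
    induction σ using TensorProduct.induction_on with
    | zero => simp
    | tmul c d => simp [Algebra.TensorProduct.tmul_mul_tmul]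
    | add σ τ hσ hτ => simp only [tmul_add, map_add, mul_add, LinearMap.add_apply, hσ, hτ]
  | add ρ τ hρ hτ => simp only [add_tmul, map_add, add_mul, LinearMap.add_apply, hρ, hτ]

theorem coactOf_mul
    (act_alg : ∀ (h : H) (ℓ₁ ℓ₂ : L),
      act (h ⊗ₜ[k] (ℓ₁ * ℓ₂)) = pairAct act ℓ₁ ℓ₂ (Coalgebra.comul h))
    {ρ : H ⊗[k] H} (hρ : rTensor H (Coalgebra.comul (R := k)) ρ =
      rot3 k H H H (ρ ⊗ₜ[k] 1) * (TensorProduct.assoc k H H H).symm (1 ⊗ₜ[k] ρ))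
    (ℓ₁ ℓ₂ : L) :
    coactOf act ρ (ℓ₁ * ℓ₂) = coactOf act ρ ℓ₁ * coactOf act ρ ℓ₂ := by
  rw [coactOf_mul_eq_lTensor_pairAct act act_alg, hρ, lTensor_pairAct_comm_rot3_mul]

lemma rTensor_comul_coactOf (ℓ : L) (ρ : H ⊗[k] H) :
    rTensor L (Coalgebra.comul (R := k)) (coactOf act ρ ℓ) =
      lTensor (H ⊗[k] H) (act ∘ₗ (mk k H L).flip ℓ)
        (TensorProduct.comm k H (H ⊗[k] H) (lTensor H (Coalgebra.comul (R := k)) ρ)) := by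
  induction ρ using TensorProduct.induction_on with
  | zero => simp
  | tmul a b => simp
  | add ρ σ hρ hσ => simp only [map_add, LinearMap.add_apply, hρ, hσ]

lemma lTensor_act_comm_assoc_rot3_mul
    (act_mul : ∀ (x y : H) (ℓ : L), act ((x * y) ⊗ₜ[k] ℓ) = act (x ⊗ₜ[k] act (y ⊗ₜ[k] ℓ)))
    (ℓ : L) (ρ σ : H ⊗[k] H) :
    lTensor (H ⊗[k] H) (act ∘ₗ (mk k H L).flip ℓ) (TensorProduct.comm k H (H ⊗[k] H)
        (TensorProduct.assoc k H H H (rot3 k H H H (ρ ⊗ₜ[k] 1) * (σ ⊗ₜ[k] 1)))) =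
      (TensorProduct.assoc k H H L).symm (lTensor H (coactOf act ρ) (coactOf act σ ℓ)) := by
  induction ρ using TensorProduct.induction_on with
  | zero => simp
  | tmul a b =>
    induction σ using TensorProduct.induction_on with
    | zero => simp
    | tmul c d => simp [Algebra.TensorProduct.tmul_mul_tmul, act_mul]
    | add σ τ hσ hτ => simp only [add_tmul, map_add, mul_add, LinearMap.add_apply, hσ, hτ]
  | add ρ τ hρ hτ =>
    simp only [add_tmul, map_add, add_mul, lTensor_add, LinearMap.add_apply, hρ, hτ]

theorem coactOf_coassoc
    (act_mul : ∀ (x y : H) (ℓ : L), act ((x * y) ⊗ₜ[k] ℓ) = act (x ⊗ₜ[k] act (y ⊗ₜ[k] ℓ)))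
    {ρ : H ⊗[k] H} (hρ : lTensor H (Coalgebra.comul (R := k)) ρ =
      TensorProduct.assoc k H H H (rot3 k H H H (ρ ⊗ₜ[k] 1) * (ρ ⊗ₜ[k] 1))) :
    rTensor L (Coalgebra.comul (R := k)) ∘ₗ coactOf act ρ =
      (TensorProduct.assoc k H H L).symm.toLinearMap ∘ₗ lTensor H (coactOf act ρ) ∘ₗ
        coactOf act ρ := by
  refine LinearMap.ext fun ℓ => ?_
  simp only [coe_comp, Function.comp_apply, LinearEquiv.coe_coe]
  rw [rTensor_comul_coactOf, hρ, lTensor_act_comm_assoc_rot3_mul act act_mul]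

lemma rTensor_lid_rTensor_counit_rot3_mul (ρ σ : H ⊗[k] H) :
    rTensor H ((TensorProduct.lid k H).toLinearMap ∘ₗ rTensor H (Coalgebra.counit (R := k)))
        (rot3 k H H H (ρ ⊗ₜ[k] 1) * (TensorProduct.assoc k H H H).symm (1 ⊗ₜ[k] σ)) =
      (1 ⊗ₜ[k] TensorProduct.lid k H (rTensor H (Coalgebra.counit (R := k)) ρ)) * σ := by
  induction ρ using TensorProduct.induction_on with
  | zero => simp
  | tmul a b =>
    induction σ using TensorProduct.induction_on with
    | zero => simp
    | tmul c d => simp [Algebra.TensorProduct.tmul_mul_tmul, smul_tmul', tmul_smul]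
    | add σ τ hσ hτ => simp only [tmul_add, map_add, mul_add, hσ, hτ]
  | add ρ τ hρ hτ => simp only [add_tmul, map_add, add_mul, tmul_add, hρ, hτ]

lemma lTensor_rid_lTensor_counit_assoc_rot3_mul (ρ σ : H ⊗[k] H) :
    lTensor H ((TensorProduct.rid k H).toLinearMap ∘ₗ lTensor H (Coalgebra.counit (R := k)))
        (TensorProduct.assoc k H H H (rot3 k H H H (ρ ⊗ₜ[k] 1) * (σ ⊗ₜ[k] 1))) =
      (TensorProduct.rid k H (lTensor H (Coalgebra.counit (R := k)) ρ) ⊗ₜ[k] 1) * σ := by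
  induction ρ using TensorProduct.induction_on with
  | zero => simp
  | tmul a b =>
    induction σ using TensorProduct.induction_on with
    | zero => simp
    | tmul c d => simp [Algebra.TensorProduct.tmul_mul_tmul, smul_tmul', tmul_smul]
    | add σ τ hσ hτ => simp only [add_tmul, map_add, mul_add, hσ, hτ]
  | add ρ τ hρ hτ => simp only [add_tmul, map_add, add_mul, hρ, hτ]

lemma lid_rTensor_counit_eq_one {ρ : H ⊗[k] H} (hu : IsUnit ρ)
    (hρ : rTensor H (Coalgebra.comul (R := k)) ρ =
      rot3 k H H H (ρ ⊗ₜ[k] 1) * (TensorProduct.assoc k H H H).symm (1 ⊗ₜ[k] ρ)) :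
    TensorProduct.lid k H (rTensor H (Coalgebra.counit (R := k)) ρ) = 1 := by
  have hε : ∀ x : H ⊗[k] H, rTensor H ((TensorProduct.lid k H).toLinearMap ∘ₗ
      rTensor H (Coalgebra.counit (R := k))) (rTensor H (Coalgebra.comul (R := k)) x) = x := by
    intro x
    induction x using TensorProduct.induction_on with
    | zero => simp
    | tmul a b => simp [Coalgebra.rTensor_counit_comul]
    | add x y hx hy => simp only [map_add, hx, hy]
  have hone :
      (1 : H) ⊗ₜ[k] TensorProduct.lid k H (rTensor H (Coalgebra.counit (R := k)) ρ) = 1 := by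
    rw [← hu.mul_eq_right, ← rTensor_lid_rTensor_counit_rot3_mul, ← hρ, hε]
  simpa [Algebra.TensorProduct.one_def] using
    congr(TensorProduct.lid k H (rTensor H (Coalgebra.counit (R := k)) $hone))

lemma rid_lTensor_counit_eq_one {ρ : H ⊗[k] H} (hu : IsUnit ρ)
    (hρ : lTensor H (Coalgebra.comul (R := k)) ρ =
      TensorProduct.assoc k H H H (rot3 k H H H (ρ ⊗ₜ[k] 1) * (ρ ⊗ₜ[k] 1))) :
    TensorProduct.rid k H (lTensor H (Coalgebra.counit (R := k)) ρ) = 1 := by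
  have hε : ∀ x : H ⊗[k] H, lTensor H ((TensorProduct.rid k H).toLinearMap ∘ₗ
      lTensor H (Coalgebra.counit (R := k))) (lTensor H (Coalgebra.comul (R := k)) x) = x := by
    intro x
    induction x using TensorProduct.induction_on with
    | zero => simp
    | tmul a b => simp [Coalgebra.lTensor_counit_comul]
    | add x y hx hy => simp only [map_add, hx, hy]
  have hone :
      TensorProduct.rid k H (lTensor H (Coalgebra.counit (R := k)) ρ) ⊗ₜ[k] (1 : H) = 1 := by
    rw [← hu.mul_eq_right, ← lTensor_rid_lTensor_counit_assoc_rot3_mul, ← hρ, hε]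
  simpa [Algebra.TensorProduct.one_def] using
    congr(TensorProduct.rid k H (lTensor H (Coalgebra.counit (R := k)) $hone))

lemma coactOf_apply_one
    (act_unit : ∀ h : H, act (h ⊗ₜ[k] (1 : L)) = Coalgebra.counit (R := k) h • (1 : L))
    (ρ : H ⊗[k] H) :
    coactOf act ρ 1 = TensorProduct.lid k H (rTensor H (Coalgebra.counit (R := k)) ρ) ⊗ₜ[k] 1 := by
  induction ρ using TensorProduct.induction_on with
  | zero => simp
  | tmul a b => simp [act_unit, smul_tmul', tmul_smul]
  | add ρ σ hρ hσ => simp only [map_add, LinearMap.add_apply, add_tmul, hρ, hσ]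

theorem coactOf_one
    (act_unit : ∀ h : H, act (h ⊗ₜ[k] (1 : L)) = Coalgebra.counit (R := k) h • (1 : L))
    {ρ : H ⊗[k] H} (hu : IsUnit ρ) (hρ : rTensor H (Coalgebra.comul (R := k)) ρ =
      rot3 k H H H (ρ ⊗ₜ[k] 1) * (TensorProduct.assoc k H H H).symm (1 ⊗ₜ[k] ρ)) :
    coactOf act ρ 1 = 1 := by
  rw [coactOf_apply_one act act_unit, lid_rTensor_counit_eq_one hu hρ]
  rfl

lemma lid_rTensor_counit_coactOf (ℓ : L) (ρ : H ⊗[k] H) :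
    TensorProduct.lid k L (rTensor L (Coalgebra.counit (R := k)) (coactOf act ρ ℓ)) =
      act (TensorProduct.rid k H (lTensor H (Coalgebra.counit (R := k)) ρ) ⊗ₜ[k] ℓ) := by
  induction ρ using TensorProduct.induction_on with
  | zero => simp
  | tmul a b => simp [← smul_tmul']
  | add ρ σ hρ hσ => simp only [map_add, LinearMap.add_apply, add_tmul, hρ, hσ]

theorem coactOf_counit (act_one : ∀ ℓ : L, act ((1 : H) ⊗ₜ[k] ℓ) = ℓ)
    {ρ : H ⊗[k] H} (hu : IsUnit ρ) (hρ : lTensor H (Coalgebra.comul (R := k)) ρ =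
      TensorProduct.assoc k H H H (rot3 k H H H (ρ ⊗ₜ[k] 1) * (ρ ⊗ₜ[k] 1))) :
    (TensorProduct.lid k L).toLinearMap ∘ₗ rTensor L (Coalgebra.counit (R := k)) ∘ₗ
      coactOf act ρ = LinearMap.id := by
  refine LinearMap.ext fun ℓ => ?_
  simp only [coe_comp, Function.comp_apply, LinearEquiv.coe_coe, id_coe, id_eq]
  rw [lid_rTensor_counit_coactOf, rid_lTensor_counit_eq_one hu hρ, act_one]

lemma rTensor_mul'_rot3_rTensor_coactOf
    (act_mul : ∀ (x y : H) (ℓ : L), act ((x * y) ⊗ₜ[k] ℓ) = act (x ⊗ₜ[k] act (y ⊗ₜ[k] ℓ)))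
    (ℓ : L) (ρ z : H ⊗[k] H) :
    rTensor L (mul' k H) (rot3 k H L H (rTensor H (coactOf act ρ)
        (rTensor H act (rot3 k H H L (z ⊗ₜ[k] ℓ))))) = coactOf act (ρ * z) ℓ := by
  induction z using TensorProduct.induction_on with
  | zero => simp
  | tmul x₁ x₂ =>
    induction ρ using TensorProduct.induction_on with
    | zero => simp
    | tmul a b => simp [Algebra.TensorProduct.tmul_mul_tmul, act_mul]
    | add ρ σ hρ hσ => simp only [map_add, add_mul, rTensor_add, LinearMap.add_apply, hρ, hσ]
  | add z w hz hw => simp only [add_tmul, map_add, mul_add, LinearMap.add_apply, hz, hw]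

lemma map_mul'_tensorTensorTensorComm_coactOf
    (act_mul : ∀ (x y : H) (ℓ : L), act ((x * y) ⊗ₜ[k] ℓ) = act (x ⊗ₜ[k] act (y ⊗ₜ[k] ℓ)))
    (ℓ : L) (z ρ : H ⊗[k] H) :
    map (mul' k H) act (tensorTensorTensorComm k H H H L (z ⊗ₜ[k] coactOf act ρ ℓ)) =
      coactOf act (TensorProduct.comm k H H z * ρ) ℓ := by
  induction z using TensorProduct.induction_on with
  | zero => simp
  | tmul x₁ x₂ =>
    induction ρ using TensorProduct.induction_on with
    | zero => simp
    | tmul a b => simp [Algebra.TensorProduct.tmul_mul_tmul, act_mul]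
    | add ρ σ hρ hσ => simp only [map_add, mul_add, tmul_add, LinearMap.add_apply, hρ, hσ]
  | add z w hz hw => simp only [add_tmul, map_add, add_mul, LinearMap.add_apply, hz, hw]

theorem coactOf_compat
    (act_mul : ∀ (x y : H) (ℓ : L), act ((x * y) ⊗ₜ[k] ℓ) = act (x ⊗ₜ[k] act (y ⊗ₜ[k] ℓ)))
    {ρ : H ⊗[k] H} (hρ : ∀ h : H, ρ * Coalgebra.comul (R := k) h =
      TensorProduct.comm k H H (Coalgebra.comul (R := k) h) * ρ) :
    rTensor L (mul' k H) ∘ₗ rot3 k H L H ∘ₗ rTensor H (coactOf act ρ) ∘ₗ rTensor H act ∘ₗ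
        rot3 k H H L ∘ₗ rTensor L (Coalgebra.comul (R := k)) =
      map (mul' k H) act ∘ₗ (tensorTensorTensorComm k H H H L).toLinearMap ∘ₗ
        map (Coalgebra.comul (R := k)) (coactOf act ρ) := by
  refine TensorProduct.ext' fun x ℓ => ?_
  simp only [coe_comp, Function.comp_apply, LinearEquiv.coe_coe, rTensor_tmul, map_tmul]
  rw [rTensor_mul'_rot3_rTensor_coactOf act act_mul,
    map_mul'_tensorTensorTensorComm_coactOf act act_mul, hρ]

lemma mul'_rTensor_act_rot3_coactOf (ℓ₁ ℓ₂ : L) (ρ : H ⊗[k] H) :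
    mul' k L (rTensor L act (rot3 k H L L (coactOf act ρ ℓ₁ ⊗ₜ[k] ℓ₂))) =
      pairAct act ℓ₂ ℓ₁ (TensorProduct.comm k H H ρ) := by
  induction ρ using TensorProduct.induction_on with
  | zero => simp
  | tmul a b => simp
  | add ρ σ hρ hσ => simp only [map_add, LinearMap.add_apply, add_tmul, hρ, hσ]

theorem mul'_eq_mul'_comp_rTensor_coactOf {ρ : H ⊗[k] H}
    (hρ : ∀ ℓ₁ ℓ₂ : L, ℓ₁ * ℓ₂ = pairAct act ℓ₂ ℓ₁ (TensorProduct.comm k H H ρ)) :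
    mul' k L = mul' k L ∘ₗ rTensor L act ∘ₗ rot3 k H L L ∘ₗ rTensor L (coactOf act ρ) := by
  refine TensorProduct.ext' fun ℓ₁ ℓ₂ => ?_
  simp only [coe_comp, Function.comp_apply, rTensor_tmul, mul'_apply]
  rw [mul'_rTensor_act_rot3_coactOf, hρ]

end CoactionOfRMatrix

variable {H : Type*} [Ring H] [HopfAlgebra k H]
variable {L : Type*} [Ring L] [Algebra k L]

theorem statement2
    (r : H ⊗[k] H)
    -- `r` is invertible
    (rinv : H ⊗[k] H) (hr_inv : r * rinv = 1 ∧ rinv * r = 1)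
    -- quasitriangularity axioms:
    (hr1 : LinearMap.rTensor H (Coalgebra.comul (R := k)) r
            = (rot3 k H H H (r ⊗ₜ[k] (1 : H))) * ((TensorProduct.assoc k H H H).symm ((1 : H) ⊗ₜ[k] r)))
    (hr2 : LinearMap.lTensor H (Coalgebra.comul (R := k)) r
            = (TensorProduct.assoc k H H H)
                ((rot3 k H H H (r ⊗ₜ[k] (1 : H))) * (r ⊗ₜ[k] (1 : H))))
    (hr3 : ∀ h : H, r * (Coalgebra.comul (R := k) h)
            = (TensorProduct.comm k H H (Coalgebra.comul (R := k) h)) * r)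
    -- `L` is a left `H`-module algebra:
    (act : H ⊗[k] L →ₗ[k] L)
    (act_one : ∀ ℓ : L, act ((1 : H) ⊗ₜ[k] ℓ) = ℓ)
    (act_mul : ∀ (x y : H) (ℓ : L), act ((x * y) ⊗ₜ[k] ℓ) = act (x ⊗ₜ[k] act (y ⊗ₜ[k] ℓ)))
    (act_alg : ∀ (h : H) (ℓ₁ ℓ₂ : L),
      act (h ⊗ₜ[k] (ℓ₁ * ℓ₂))
        = (LinearMap.mul' k L) ((TensorProduct.map act act)
            ((TensorProduct.tensorTensorTensorComm k H H L L)
              ((Coalgebra.comul (R := k) h) ⊗ₜ[k] (ℓ₁ ⊗ₜ[k] ℓ₂)))))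
    (act_unit : ∀ h : H, act (h ⊗ₜ[k] (1 : L)) = (Coalgebra.counit (R := k) h) • (1 : L))
    -- quasi-commutativity `(R₂ ▷ ℓ₂)(R₁ ▷ ℓ₁) = ℓ₁ ℓ₂`:
    (hqc : LinearMap.mul' k L
            = (LinearMap.mul' k L) ∘ₗ (TensorProduct.map act act) ∘ₗ
                (TensorProduct.tensorTensorTensorComm k H H L L).toLinearMap ∘ₗ
                (TensorProduct.mk k (H ⊗[k] H) (L ⊗[k] L) ((TensorProduct.comm k H H) r)) ∘ₗ
                (TensorProduct.comm k L L).toLinearMap) :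
    -- the coaction `δ(ℓ) = R₂ ⊗ (R₁ ▷ ℓ)`:
    ∀ δ : L →ₗ[k] H ⊗[k] L,
      δ = (LinearMap.lTensor H act) ∘ₗ (TensorProduct.assoc k H H L).toLinearMap ∘ₗ
            (TensorProduct.mk k (H ⊗[k] H) L ((TensorProduct.comm k H H) r)) →
      -- `δ` is a unital algebra homomorphism `L → H ⊗ L`
      (∀ ℓ₁ ℓ₂ : L, δ (ℓ₁ * ℓ₂) = δ ℓ₁ * δ ℓ₂) ∧
      δ (1 : L) = 1 ∧
      -- `δ` is a coaction: coassociativity and counitality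
      (LinearMap.rTensor L (Coalgebra.comul (R := k))) ∘ₗ δ
        = (TensorProduct.assoc k H H L).symm.toLinearMap ∘ₗ (LinearMap.lTensor H δ) ∘ₗ δ ∧
      (TensorProduct.lid k L).toLinearMap ∘ₗ
          (LinearMap.rTensor L (Coalgebra.counit (R := k))) ∘ₗ δ = LinearMap.id ∧
      -- base-algebra condition (i):
      (LinearMap.rTensor L (LinearMap.mul' k H)) ∘ₗ (rot3 k H L H) ∘ₗ
          (LinearMap.rTensor H δ) ∘ₗ (LinearMap.rTensor H act) ∘ₗ (rot3 k H H L) ∘ₗ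
          (LinearMap.rTensor L (Coalgebra.comul (R := k)))
        = (TensorProduct.map (LinearMap.mul' k H) act) ∘ₗ
            (TensorProduct.tensorTensorTensorComm k H H H L).toLinearMap ∘ₗ
            (TensorProduct.map (Coalgebra.comul (R := k)) δ) ∧
      -- base-algebra condition (ii): `ℓ₁ℓ₂ = (ℓ₁⁽¹⁾ ▷ ℓ₂) ℓ₁⁽²⁾`
      LinearMap.mul' k L
        = (LinearMap.mul' k L) ∘ₗ (LinearMap.rTensor L act) ∘ₗ (rot3 k H L L) ∘ₗ
            (LinearMap.rTensor L δ) := by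
  rintro δ rfl
  have hr : IsUnit r := ⟨⟨r, rinv, hr_inv.1, hr_inv.2⟩, rfl⟩
  exact ⟨coactOf_mul act act_alg hr1, coactOf_one act act_unit hr hr1,
    coactOf_coassoc act act_mul hr2, coactOf_counit act act_one hr hr2,
    coactOf_compat act act_mul hr3,
    mul'_eq_mul'_comp_rTensor_coactOf act fun ℓ₁ ℓ₂ => LinearMap.congr_fun hqc (ℓ₁ ⊗ₜ ℓ₂)⟩


end
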